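/- Let χ be a totally antisymmetric 3-tensor on ℝ⁷ and let a ∈ ℝ, ω ∈ ℝ⁷ and the traceless symmetric matrix h be its projection data, i.e. a = (1/42) Σ χ_{abc} φ₀_{abc}, ω_a = −(1/24) Σ χ_{mnp} ψ₀_{mnpa}, and h_{ab} = (3/4)[(1/2)(Σ χ_{mna} φ₀_{bmn} + Σ χ_{mnb} φ₀_{amn}) − (1/7) δ_{ab} Σ χ_{mnc} φ₀_{cmn}]. Then, with the norm of a 3-tensor ξ given by |ξ|² = (1/6) Σ_{a,b,c} (ξ_{abc})², the three projections satisfy: |π₁(χ)|² = |a φ₀|² = 7a², |π₇(χ)|² = |ω⌟ψ₀|² = 4 |ω|², and |π₂₇(χ)|² = |i_φ(h)|² = (2/9) |h|², where |ω|² = Σ_a (ω_a)² and |h|² = Σ_{a,b} (h_{ab})², and (ω⌟ψ₀)_{abc} = Σ_d ω_d ψ₀_{dabc}. -/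

import Mathlib

open scoped BigOperators

noncomputable section

/-- Kronecker delta `δ` on `Fin 7`. -/
def kd (a b : Fin 7) : ℝ := if a = b then 1 else 0

/-- The elementary alternating 3-tensor supported on permutations of `(i, j, k)`. -/
def trip (i j k a b c : Fin 7) : ℝ :=
  (if a = i ∧ b = j ∧ c = k then (1 : ℝ) else 0)
    + (if a = j ∧ b = k ∧ c = i then (1 : ℝ) else 0)
    + (if a = k ∧ b = i ∧ c = j then (1 : ℝ) else 0)
    - (if a = i ∧ b = k ∧ c = j then (1 : ℝ) else 0)
    - (if a = k ∧ b = j ∧ c = i then (1 : ℝ) else 0)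
    - (if a = j ∧ b = i ∧ c = k then (1 : ℝ) else 0)

/-- The standard `G₂` 3-form `φ₀` on `ℝ⁷`.  Indices `0, …, 6` correspond to the
paper's `1, …, 7`, so this is
`e^{123} + e^{145} + e^{167} + e^{246} - e^{257} - e^{347} - e^{356}`. -/
def phi0 (a b c : Fin 7) : ℝ :=
  trip 0 1 2 a b c + trip 0 3 4 a b c + trip 0 5 6 a b c + trip 1 3 5 a b c
    - trip 1 4 6 a b c - trip 2 3 6 a b c - trip 2 4 5 a b c

/-- The totally antisymmetric Levi-Civita symbol `ε̂` on seven indices,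
with `ε̂_{1234567} = 1`. -/
def eps7 (a b c d e f g : Fin 7) : ℝ :=
  if h : Function.Bijective ![a, b, c, d, e, f, g] then
    ((Equiv.Perm.sign (Equiv.ofBijective _ h) : ℤ) : ℝ)
  else 0

/-- The 4-form `ψ₀ = ⋆φ₀`, the Euclidean Hodge dual of `φ₀`:
`ψ₀ = e^{4567} + e^{2367} + e^{2345} + e^{1357} - e^{1346} - e^{1256} - e^{1247}`. -/
def psi0 (m n p q : Fin 7) : ℝ :=
  (1 / 6 : ℝ) * ∑ r, ∑ s, ∑ t, eps7 m n p q r s t * phi0 r s t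

/-- The map `i_φ` sending a symmetric matrix `h` to the 3-tensor
`i_φ(h)_{abc} = (1/3) Σ_d (h_{ad} φ₀_{dbc} + h_{bd} φ₀_{adc} + h_{cd} φ₀_{abd})`. -/
def iphi (h : Matrix (Fin 7) (Fin 7) ℝ) (a b c : Fin 7) : ℝ :=
  (1 / 3 : ℝ) * ∑ d, (h a d * phi0 d b c + h b d * phi0 a d c + h c d * phi0 a b d)

/-! For a 3-form `φ` of a vector cross product on `ℝⁿ`, i.e. one with
`∑_k φ_{ijk} φ_{abk} = δ_{ia} δ_{jb} - δ_{ib} δ_{ja} + ψ_{ijab}` for an alternating `ψ`, contracting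
this identity gives `∑ φ_{ijk} φ_{ajk} = (n - 1) δ_{ia}`, `∑ ψ_{ijab} φ_{abk} = (n - 3) φ_{ijk}`
and `∑ ψ_{ijab} ψ_{ljab} = (n - 1)(n - 3) δ_{il}`; for `n = 7` this yields `|a φ|² = 7 a²` and
`|ω ⌟ ψ|² = 4 |ω|²`. With `P_{abc} = ∑_d h_{ad} φ_{dbc}` one has
`3 i_φ(h)_{abc} = P_{abc} + P_{bca} + P_{cab}`. Each square contributes `(n - 1) |h|²` and each
cross term `∑ P_{abc} P_{bca}` equals `(tr h)² - |h|²`, since the `ψ`-part of the identity is skew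
in two indices that the symmetric `h` contracts; so `∑ (3 i_φ(h))² = 3 (n - 3) |h|²` for
symmetric traceless `h`. For `φ₀` and `ψ₀ = ⋆φ₀` the identity itself is checked by evaluation
over `ℤ`, the Levi-Civita symbol being the product of the signs of `v_j - v_i` over `i < j`. -/

open Finset

section CrossProductForm

variable {ι : Type*} [Fintype ι]

theorem sum_sq_add_rotate (f : ι → ι → ι → ℝ) :
    ∑ a, ∑ b, ∑ c, (f a b c + f b c a + f c a b) ^ 2
      = 3 * ∑ a, ∑ b, ∑ c, f a b c ^ 2 + 6 * ∑ a, ∑ b, ∑ c, f a b c * f b c a := by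
  have h₁ : ∑ a, ∑ b, ∑ c, f c a b ^ 2 = ∑ a, ∑ b, ∑ c, f a b c ^ 2 := sum_comm_cycle
  have h₂ : ∑ a, ∑ b, ∑ c, f a b c ^ 2 = ∑ a, ∑ b, ∑ c, f b c a ^ 2 := sum_comm_cycle
  have h₃ : ∑ a, ∑ b, ∑ c, f c a b * f a b c = ∑ a, ∑ b, ∑ c, f a b c * f b c a := sum_comm_cycle
  have h₄ : ∑ a, ∑ b, ∑ c, f a b c * f b c a = ∑ a, ∑ b, ∑ c, f b c a * f c a b := sum_comm_cycle
  have hexp : ∀ a b c, (f a b c + f b c a + f c a b) ^ 2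
      = f a b c ^ 2 + f b c a ^ 2 + f c a b ^ 2 + 2 * (f a b c * f b c a)
        + 2 * (f b c a * f c a b) + 2 * (f c a b * f a b c) := fun a b c => by ring
  simp only [hexp, sum_add_distrib, ← mul_sum]
  linarith

variable [DecidableEq ι]

local notation "δ" => (1 : Matrix _ _ ℝ)

theorem sum_sq_sum_mul_of_orthogonal {κ : Type*} [Fintype κ] (ω : ι → ℝ) (T : ι → κ → ℝ)
    (c : ℝ) (hT : ∀ d e, ∑ x, T d x * T e x = c * δ d e) :
    ∑ x, (∑ d, ω d * T d x) ^ 2 = c * ∑ d, ω d ^ 2 := by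
  calc ∑ x, (∑ d, ω d * T d x) ^ 2 = ∑ d, ∑ e, ω d * ω e * ∑ x, T d x * T e x := by
        simp only [sq, sum_mul_sum]
        simp only [mul_sum]
        rw [sum_comm]
        refine sum_congr rfl fun d _ => ?_
        rw [sum_comm]
        exact sum_congr rfl fun e _ => sum_congr rfl fun x _ => by ring
    _ = c * ∑ d, ω d ^ 2 := by
        simp only [hT, Matrix.one_apply, mul_ite, mul_one, mul_zero, sum_ite_eq, mem_univ, if_true,
          mul_sum]
        exact sum_congr rfl fun d _ => by ring

/-- The contraction identity of the 3-form `φ_{ijk} = ⟪e_i × e_j, e_k⟫` of a vector cross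
product, `ψ` being the associated 4-form: e.g. the `G₂` forms on `ℝ⁷`, or the volume form on `ℝ³`
with `ψ = 0`. -/
structure IsCrossProductForm (φ : ι → ι → ι → ℝ) (ψ : ι → ι → ι → ι → ℝ) : Prop where
  antisymm_one_two : ∀ a b c, φ b a c = -φ a b c
  antisymm_two_three : ∀ a b c, φ a c b = -φ a b c
  psi_antisymm_one_three : ∀ a b c d, ψ c b a d = -ψ a b c d
  sum_phi_mul_phi : ∀ i j a b, ∑ k, φ i j k * φ a b k = δ i a * δ j b - δ i b * δ j a + ψ i j a b

namespace IsCrossProductForm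

variable {φ : ι → ι → ι → ℝ} {ψ : ι → ι → ι → ι → ℝ}

theorem cyclic (hφ : IsCrossProductForm φ ψ) (a b c : ι) : φ b c a = φ a b c := by
  rw [hφ.antisymm_two_three, hφ.antisymm_one_two, neg_neg]

theorem psi_eq (hφ : IsCrossProductForm φ ψ) (i j a b : ι) :
    ψ i j a b = ∑ k, φ i j k * φ a b k - δ i a * δ j b + δ i b * δ j a := by
  rw [hφ.sum_phi_mul_phi]
  ring

theorem psi_antisymm_one_two (hφ : IsCrossProductForm φ ψ) (i j a b : ι) :
    ψ j i a b = -ψ i j a b := by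
  simp only [hφ.psi_eq, hφ.antisymm_one_two j i, neg_mul, sum_neg_distrib]
  ring

theorem psi_antisymm_three_four (hφ : IsCrossProductForm φ ψ) (i j a b : ι) :
    ψ i j b a = -ψ i j a b := by
  simp only [hφ.psi_eq, hφ.antisymm_one_two b a, mul_neg, sum_neg_distrib]
  ring

theorem psi_antisymm_two_four (hφ : IsCrossProductForm φ ψ) (a b c d : ι) :
    ψ a d c b = -ψ a b c d := by
  rw [hφ.psi_antisymm_one_two, hφ.psi_antisymm_three_four, ← hφ.psi_antisymm_one_three,
    hφ.psi_antisymm_one_two, hφ.psi_antisymm_three_four]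
  ring

theorem sum_psi_diag (hφ : IsCrossProductForm φ ψ) (i a : ι) : ∑ j, ψ i j a j = 0 :=
  sum_eq_zero fun j _ => by linarith [hφ.psi_antisymm_two_four i j a j]

theorem sum_sum_phi_mul_phi (hφ : IsCrossProductForm φ ψ) (i a : ι) :
    ∑ j, ∑ k, φ i j k * φ a j k = (Fintype.card ι - 1 : ℝ) * δ i a := by
  simp only [hφ.sum_phi_mul_phi, sum_add_distrib, sum_sub_distrib, hφ.sum_psi_diag,
    Matrix.one_apply, mul_ite, mul_one, mul_zero, sum_ite_eq', mem_univ, if_true, sum_const,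
    card_univ, nsmul_eq_mul, add_zero]
  split_ifs <;> ring

theorem sum_sum_phi_mul_phi' (hφ : IsCrossProductForm φ ψ) (k l : ι) :
    ∑ a, ∑ b, φ a b k * φ a b l = (Fintype.card ι - 1 : ℝ) * δ k l := by
  simp only [hφ.cyclic k, hφ.cyclic l, hφ.sum_sum_phi_mul_phi]

theorem sum_sq_phi (hφ : IsCrossProductForm φ ψ) :
    ∑ i, ∑ j, ∑ k, φ i j k ^ 2 = Fintype.card ι * (Fintype.card ι - 1) := by
  simp only [sq, hφ.sum_sum_phi_mul_phi, Matrix.one_apply_eq, mul_one, sum_const, card_univ,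
    nsmul_eq_mul]

theorem sum_psi_mul_phi (hφ : IsCrossProductForm φ ψ) (i j k : ι) :
    ∑ a, ∑ b, ψ i j a b * φ a b k = (Fintype.card ι - 3 : ℝ) * φ i j k := by
  have hφφ : ∑ a, ∑ b, (∑ l, φ i j l * φ a b l) * φ a b k
      = (Fintype.card ι - 1 : ℝ) * φ i j k := by
    simp only [sum_mul, mul_assoc]
    rw [sum_comm_cycle]
    simp only [← mul_sum, hφ.sum_sum_phi_mul_phi', Matrix.one_apply, mul_ite, mul_one, mul_zero,
      sum_ite_eq', mem_univ, if_true]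
    ring
  simp only [hφ.psi_eq, sub_mul, add_mul, sum_add_distrib, sum_sub_distrib, hφφ, Matrix.one_apply,
    ite_mul, one_mul, zero_mul, sum_ite_eq, sum_ite_irrel, sum_const_zero, mem_univ, if_true,
    hφ.antisymm_one_two i j]
  ring

theorem sum_psi_mul_psi (hφ : IsCrossProductForm φ ψ) (i l : ι) :
    ∑ j, ∑ a, ∑ b, ψ i j a b * ψ l j a b
      = (Fintype.card ι - 1 : ℝ) * (Fintype.card ι - 3) * δ i l := by
  have hφφ : ∑ j, ∑ a, ∑ b, ψ i j a b * ∑ k, φ l j k * φ a b k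
      = (Fintype.card ι - 1 : ℝ) * (Fintype.card ι - 3) * δ i l :=
    calc ∑ j, ∑ a, ∑ b, ψ i j a b * ∑ k, φ l j k * φ a b k
        = ∑ j, ∑ k, φ l j k * ∑ a, ∑ b, ψ i j a b * φ a b k := by
          refine sum_congr rfl fun j _ => ?_
          simp only [mul_sum]
          rw [sum_comm_cycle]
          exact sum_congr rfl fun k _ => sum_congr rfl fun a _ => sum_congr rfl fun b _ => by ring
      _ = (Fintype.card ι - 3) * ∑ j, ∑ k, φ i j k * φ l j k := by
          simp only [hφ.sum_psi_mul_phi, mul_sum]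
          exact sum_congr rfl fun j _ => sum_congr rfl fun k _ => by ring
      _ = _ := by
          rw [hφ.sum_sum_phi_mul_phi]
          ring
  have hδ₁ : ∑ j, ∑ a, ∑ b, ψ i j a b * (δ l a * δ j b) = 0 := by
    simp only [Matrix.one_apply, mul_ite, mul_one, mul_zero, sum_ite_eq, mem_univ, if_true]
    exact hφ.sum_psi_diag i l
  have hδ₂ : ∑ j, ∑ a, ∑ b, ψ i j a b * (δ l b * δ j a) = 0 := by
    simp only [Matrix.one_apply, mul_ite, mul_one, mul_zero, sum_ite_eq, sum_ite_irrel,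
      sum_const_zero, mem_univ, if_true, hφ.psi_antisymm_three_four i _ l, sum_neg_distrib,
      hφ.sum_psi_diag, neg_zero]
  simp only [hφ.psi_eq l, mul_add, mul_sub, sum_add_distrib, sum_sub_distrib, hφφ, hδ₁, hδ₂]
  ring

theorem sum_sq_sum_mul_psi (hφ : IsCrossProductForm φ ψ) (ω : ι → ℝ) :
    ∑ a, ∑ b, ∑ c, (∑ d, ω d * ψ d a b c) ^ 2
      = (Fintype.card ι - 1 : ℝ) * (Fintype.card ι - 3) * ∑ d, ω d ^ 2 := by
  have := sum_sq_sum_mul_of_orthogonal ω (fun d (x : ι × ι × ι) => ψ d x.1 x.2.1 x.2.2) _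
    fun d e => by simpa only [Fintype.sum_prod_type] using hφ.sum_psi_mul_psi d e
  simpa only [Fintype.sum_prod_type] using this

theorem sum_sq_sum_mul_phi (hφ : IsCrossProductForm φ ψ) (h : Matrix ι ι ℝ) :
    ∑ a, ∑ b, ∑ c, (∑ d, h a d * φ d b c) ^ 2
      = (Fintype.card ι - 1 : ℝ) * ∑ a, ∑ b, h a b ^ 2 := by
  rw [mul_sum]
  refine sum_congr rfl fun a _ => ?_
  have := sum_sq_sum_mul_of_orthogonal (h a) (fun d (x : ι × ι) => φ d x.1 x.2) _
    fun d e => by simpa only [Fintype.sum_prod_type] using hφ.sum_sum_phi_mul_phi d e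
  simpa only [Fintype.sum_prod_type] using this

theorem sum_mul_mul_psi_eq_zero (hφ : IsCrossProductForm φ ψ) {h : Matrix ι ι ℝ}
    (hs : h.IsSymm) : ∑ a, ∑ d, ∑ b, ∑ e, h a d * h b e * ψ d b a e = 0 := by
  have hneg : ∑ a, ∑ d, ∑ b, ∑ e, h a d * h b e * ψ d b a e
      = -∑ a, ∑ d, ∑ b, ∑ e, h a d * h b e * ψ d b a e := by
    conv_lhs => rw [sum_comm]
    simp only [← sum_neg_distrib]
    refine sum_congr rfl fun a _ => sum_congr rfl fun d _ => sum_congr rfl fun b _ =>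
      sum_congr rfl fun e _ => ?_
    rw [hs.apply d a, hφ.psi_antisymm_one_three]
    ring
  linarith

theorem sum_mul_rotate (hφ : IsCrossProductForm φ ψ) {h : Matrix ι ι ℝ} (hs : h.IsSymm)
    (ht : h.trace = 0) :
    ∑ a, ∑ b, ∑ c, (∑ d, h a d * φ d b c) * (∑ e, h b e * φ e c a) = -∑ a, ∑ b, h a b ^ 2 :=
  calc ∑ a, ∑ b, ∑ c, (∑ d, h a d * φ d b c) * (∑ e, h b e * φ e c a)
      = ∑ a, ∑ d, ∑ b, ∑ e, h a d * h b e * ∑ c, φ d b c * φ a e c := by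
        refine sum_congr rfl fun a _ => ?_
        simp only [sum_mul_sum]
        simp only [mul_sum]
        rw [sum_congr rfl fun b _ => sum_comm.trans (sum_congr rfl fun d _ => sum_comm), sum_comm]
        refine sum_congr rfl fun d _ => sum_congr rfl fun b _ => sum_congr rfl fun e _ =>
          sum_congr rfl fun c _ => ?_
        rw [hφ.cyclic a e c]
        ring
    _ = ∑ a, ∑ d, ∑ b, ∑ e, h a d * h b e * (δ d a * δ b e - δ d e * δ b a + ψ d b a e) := by
        simp only [hφ.sum_phi_mul_phi]
    _ = (∑ a, h a a) ^ 2 - ∑ a, ∑ d, h a d ^ 2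
          + ∑ a, ∑ d, ∑ b, ∑ e, h a d * h b e * ψ d b a e := by
        simp only [mul_add, mul_sub, sum_add_distrib, sum_sub_distrib, Matrix.one_apply, mul_ite,
          mul_one, mul_zero, sum_ite_eq, sum_ite_eq', sum_ite_irrel, sum_const_zero, mem_univ,
          if_true, sq, sum_mul_sum]
    _ = -∑ a, ∑ b, h a b ^ 2 := by
        rw [show ∑ a, h a a = 0 from ht, hφ.sum_mul_mul_psi_eq_zero hs]
        ring

theorem sum_sq_action (hφ : IsCrossProductForm φ ψ) {h : Matrix ι ι ℝ} (hs : h.IsSymm)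
    (ht : h.trace = 0) :
    ∑ a, ∑ b, ∑ c, (∑ d, (h a d * φ d b c + h b d * φ a d c + h c d * φ a b d)) ^ 2
      = 3 * (Fintype.card ι - 3 : ℝ) * ∑ a, ∑ b, h a b ^ 2 := by
  have hrotate : ∀ a b c, ∑ d, (h a d * φ d b c + h b d * φ a d c + h c d * φ a b d)
      = (∑ d, h a d * φ d b c) + (∑ d, h b d * φ d c a) + (∑ d, h c d * φ d a b) := by
    intro a b c
    simp only [sum_add_distrib, hφ.cyclic a _ c, hφ.cyclic _ a b]
  simp only [hrotate]
  rw [sum_sq_add_rotate (fun a b c => ∑ d, h a d * φ d b c), hφ.sum_sq_sum_mul_phi,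
    hφ.sum_mul_rotate hs ht]
  ring

end IsCrossProductForm

end CrossProductForm

section LeviCivita

variable {n : ℕ}

def leviCivita (v : Fin n → Fin n) : ℤ :=
  if h : Function.Bijective v then (Equiv.Perm.sign (Equiv.ofBijective v h) : ℤ) else 0

theorem leviCivita_comp_swap (v : Fin n → Fin n) {i j : Fin n} (hij : i ≠ j) :
    leviCivita (v ∘ Equiv.swap i j) = -leviCivita v := by
  unfold leviCivita
  by_cases hv : Function.Bijective v
  · have hvs : Function.Bijective (v ∘ Equiv.swap i j) := hv.comp (Equiv.bijective _)
    rw [dif_pos hvs, dif_pos hv, show Equiv.ofBijective _ hvs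
        = Equiv.ofBijective v hv * Equiv.swap i j from Equiv.ext fun _ => rfl,
      Equiv.Perm.sign_mul, Equiv.Perm.sign_swap hij]
    simp
  · rw [dif_neg hv, dif_neg (by rwa [Equiv.bijective_comp]), neg_zero]

theorem leviCivita_eq_prod_sign (v : Fin n → Fin n) :
    leviCivita v = ∏ j, ∏ i, if i < j then Int.sign ((v j : ℤ) - v i) else 1 := by
  unfold leviCivita
  split_ifs with hv
  · rw [Equiv.Perm.sign_eq_prod_prod_Iio]
    push_cast
    refine prod_congr rfl fun j _ => ?_
    rw [← prod_filter]
    refine prod_congr (by ext; simp) fun i hi => ?_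
    have hne : v i ≠ v j := hv.injective.ne (mem_filter.1 hi).2.ne
    simp only [Equiv.ofBijective_apply]
    split_ifs with hlt
    · simp [Int.sign_eq_one_of_pos, Fin.lt_def.1 hlt]
    · have : (v j : ℕ) < v i := Fin.lt_def.1 (lt_of_le_of_ne (not_lt.1 hlt) hne.symm)
      simp [Int.sign_eq_neg_one_of_neg, this]
  · obtain ⟨i, j, hij, hvij⟩ : ∃ i j, i ≠ j ∧ v i = v j := by
      by_contra! h
      exact hv (Finite.injective_iff_bijective.1 fun i j hv => by_contra fun hij => h i j hij hv)
    rcases hij.lt_or_gt with hlt | hlt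
    · exact (prod_eq_zero (mem_univ j) (prod_eq_zero (mem_univ i) (by simp [hlt, hvij]))).symm
    · exact (prod_eq_zero (mem_univ i) (prod_eq_zero (mem_univ j) (by simp [hlt, hvij]))).symm

end LeviCivita

def leviCivita₇ (a b c d e f g : Fin 7) : ℤ :=
  Int.sign ((b : ℤ) - a) *
    Int.sign ((c : ℤ) - a) * Int.sign ((c : ℤ) - b) *
    Int.sign ((d : ℤ) - a) * Int.sign ((d : ℤ) - b) * Int.sign ((d : ℤ) - c) *
    Int.sign ((e : ℤ) - a) * Int.sign ((e : ℤ) - b) * Int.sign ((e : ℤ) - c) *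
    Int.sign ((e : ℤ) - d) *
    Int.sign ((f : ℤ) - a) * Int.sign ((f : ℤ) - b) * Int.sign ((f : ℤ) - c) *
    Int.sign ((f : ℤ) - d) * Int.sign ((f : ℤ) - e) *
    Int.sign ((g : ℤ) - a) * Int.sign ((g : ℤ) - b) * Int.sign ((g : ℤ) - c) *
    Int.sign ((g : ℤ) - d) * Int.sign ((g : ℤ) - e) * Int.sign ((g : ℤ) - f)

theorem eps7_eq_leviCivita (a b c d e f g : Fin 7) :
    eps7 a b c d e f g = leviCivita ![a, b, c, d, e, f, g] := by
  unfold eps7 leviCivita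
  split_ifs <;> simp

theorem eps7_eq_leviCivita₇ (a b c d e f g : Fin 7) :
    eps7 a b c d e f g = leviCivita₇ a b c d e f g := by
  rw [eps7_eq_leviCivita, leviCivita_eq_prod_sign]
  simp only [Fin.prod_univ_seven, Fin.isValue, Matrix.cons_val_zero, Matrix.cons_val_one,
    Matrix.cons_val, mul_ite, ite_mul, one_mul, mul_one, not_lt_zero, ↓reduceIte,
    lt_self_iff_false, Fin.lt_one_iff, Fin.reduceEq, zero_lt_one, Fin.reduceLT, Int.cast_mul,
    leviCivita₇]
  ring

theorem eps7_swap_one_three (a b c d e f g : Fin 7) :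
    eps7 c b a d e f g = -eps7 a b c d e f g := by
  rw [eps7_eq_leviCivita, eps7_eq_leviCivita, ← Int.cast_neg,
    ← leviCivita_comp_swap _ (by decide : (0 : Fin 7) ≠ 2)]
  congr 2; ext x; fin_cases x <;> rfl

theorem eps7_swap_five_six (a b c d e f g : Fin 7) :
    eps7 a b c d f e g = -eps7 a b c d e f g := by
  rw [eps7_eq_leviCivita, eps7_eq_leviCivita, ← Int.cast_neg,
    ← leviCivita_comp_swap _ (by decide : (4 : Fin 7) ≠ 5)]
  congr 2; ext x; fin_cases x <;> rfl

theorem eps7_swap_six_seven (a b c d e f g : Fin 7) :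
    eps7 a b c d e g f = -eps7 a b c d e f g := by
  rw [eps7_eq_leviCivita, eps7_eq_leviCivita, ← Int.cast_neg,
    ← leviCivita_comp_swap _ (by decide : (5 : Fin 7) ≠ 6)]
  congr 2; ext x; fin_cases x <;> rfl

theorem trip_swap_one_two (i j k a b c : Fin 7) : trip i j k b a c = -trip i j k a b c := by
  unfold trip
  simp only [and_left_comm]
  ring

theorem trip_swap_two_three (i j k a b c : Fin 7) : trip i j k a c b = -trip i j k a b c := by
  unfold trip
  simp only [and_comm]
  ring

theorem phi0_swap_one_two (a b c : Fin 7) : phi0 b a c = -phi0 a b c := by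
  simp only [phi0, trip_swap_one_two _ _ _ a b c]
  ring

theorem phi0_swap_two_three (a b c : Fin 7) : phi0 a c b = -phi0 a b c := by
  simp only [phi0, trip_swap_two_three _ _ _ a b c]
  ring

theorem sum_mul_trip {f : Fin 7 → Fin 7 → Fin 7 → ℝ} (hf₁ : ∀ a b c, f b a c = -f a b c)
    (hf₂ : ∀ a b c, f a c b = -f a b c) (i j k : Fin 7) :
    ∑ a, ∑ b, ∑ c, f a b c * trip i j k a b c = 6 * f i j k := by
  simp only [trip, mul_add, mul_sub, sum_add_distrib, sum_sub_distrib, mul_ite, mul_one, mul_zero,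
    ite_and, sum_ite_eq', sum_ite_irrel, sum_const_zero, mem_univ, if_true]
  linarith [hf₁ i j k, hf₂ i j k, hf₂ j i k, hf₁ i k j, hf₁ j k i]

theorem psi0_eq_sum_eps7 (m n p q : Fin 7) :
    psi0 m n p q = eps7 m n p q 0 1 2 + eps7 m n p q 0 3 4 + eps7 m n p q 0 5 6
      + eps7 m n p q 1 3 5 - eps7 m n p q 1 4 6 - eps7 m n p q 2 3 6 - eps7 m n p q 2 4 5 := by
  simp only [psi0, phi0, mul_add, mul_sub, sum_add_distrib, sum_sub_distrib,
    sum_mul_trip (eps7_swap_five_six m n p q) (eps7_swap_six_seven m n p q)]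
  ring

theorem psi0_swap_one_three (a b c d : Fin 7) : psi0 c b a d = -psi0 a b c d := by
  simp only [psi0, eps7_swap_one_three a b c d, neg_mul, sum_neg_distrib, mul_neg]

def kdInt (a b : Fin 7) : ℤ := if a = b then 1 else 0

def tripInt (i j k a b c : Fin 7) : ℤ :=
  (if a = i ∧ b = j ∧ c = k then (1 : ℤ) else 0)
    + (if a = j ∧ b = k ∧ c = i then (1 : ℤ) else 0)
    + (if a = k ∧ b = i ∧ c = j then (1 : ℤ) else 0)
    - (if a = i ∧ b = k ∧ c = j then (1 : ℤ) else 0)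
    - (if a = k ∧ b = j ∧ c = i then (1 : ℤ) else 0)
    - (if a = j ∧ b = i ∧ c = k then (1 : ℤ) else 0)

def phiInt (a b c : Fin 7) : ℤ :=
  tripInt 0 1 2 a b c + tripInt 0 3 4 a b c + tripInt 0 5 6 a b c + tripInt 1 3 5 a b c
    - tripInt 1 4 6 a b c - tripInt 2 3 6 a b c - tripInt 2 4 5 a b c

def psiInt (m n p q : Fin 7) : ℤ :=
  leviCivita₇ m n p q 0 1 2 + leviCivita₇ m n p q 0 3 4 + leviCivita₇ m n p q 0 5 6
    + leviCivita₇ m n p q 1 3 5 - leviCivita₇ m n p q 1 4 6 - leviCivita₇ m n p q 2 3 6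
    - leviCivita₇ m n p q 2 4 5

theorem kd_eq_kdInt (a b : Fin 7) : kd a b = kdInt a b := by
  unfold kd kdInt
  push_cast [apply_ite (Int.cast : ℤ → ℝ)]
  rfl

theorem phi0_eq_phiInt (a b c : Fin 7) : phi0 a b c = phiInt a b c := by
  simp only [phi0, phiInt, trip, tripInt]
  push_cast [apply_ite (Int.cast : ℤ → ℝ)]
  rfl

theorem psi0_eq_psiInt (m n p q : Fin 7) : psi0 m n p q = psiInt m n p q := by
  simp only [psi0_eq_sum_eps7, eps7_eq_leviCivita₇, psiInt]
  push_cast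
  rfl

theorem sum_phiInt_mul_phiInt : ∀ i j a b : Fin 7, ∑ k, phiInt i j k * phiInt a b k
    = kdInt i a * kdInt j b - kdInt i b * kdInt j a + psiInt i j a b := by
  decide +kernel

theorem kd_eq_one_apply (a b : Fin 7) : kd a b = (1 : Matrix (Fin 7) (Fin 7) ℝ) a b := by
  rw [Matrix.one_apply]
  rfl

theorem isCrossProductForm_phi0_psi0 : IsCrossProductForm phi0 psi0 where
  antisymm_one_two := phi0_swap_one_two
  antisymm_two_three := phi0_swap_two_three
  psi_antisymm_one_three := psi0_swap_one_three
  sum_phi_mul_phi i j a b := by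
    simp only [phi0_eq_phiInt, psi0_eq_psiInt, ← kd_eq_one_apply, kd_eq_kdInt]
    exact_mod_cast sum_phiInt_mul_phiInt i j a b

def pi27Matrix (χ : Fin 7 → Fin 7 → Fin 7 → ℝ) : Matrix (Fin 7) (Fin 7) ℝ := fun a b =>
  (3 / 4 : ℝ) *
    ((1 / 2 : ℝ) * ((∑ m, ∑ n, χ m n a * phi0 b m n) + ∑ m, ∑ n, χ m n b * phi0 a m n)
      - (1 / 7 : ℝ) * kd a b * ∑ m, ∑ n, ∑ c, χ m n c * phi0 c m n)

theorem pi27Matrix_isSymm (χ : Fin 7 → Fin 7 → Fin 7 → ℝ) : (pi27Matrix χ).IsSymm :=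
  Matrix.IsSymm.ext fun a b => by
    simp only [pi27Matrix, kd, eq_comm (a := b)]
    ring

theorem pi27Matrix_trace (χ : Fin 7 → Fin 7 → Fin 7 → ℝ) : (pi27Matrix χ).trace = 0 := by
  have hcycle : ∑ a, ∑ m, ∑ n, χ m n a * phi0 a m n = ∑ m, ∑ n, ∑ c, χ m n c * phi0 c m n :=
    sum_comm_cycle.symm
  simp only [Matrix.trace, Matrix.diag, pi27Matrix, kd, if_true, mul_one, mul_sub, mul_add,
    sum_sub_distrib, sum_add_distrib, ← mul_sum, hcycle, sum_const, card_univ, Fintype.card_fin]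
  ring

theorem lambda3_projection_norms_general (χ : Fin 7 → Fin 7 → Fin 7 → ℝ)
    (A : ℝ)
    (ω : Fin 7 → ℝ)
    (h : Matrix (Fin 7) (Fin 7) ℝ)
    (hh : ∀ a b, h a b = (3 / 4 : ℝ) *
      ((1 / 2 : ℝ) * ((∑ m, ∑ n, χ m n a * phi0 b m n) + ∑ m, ∑ n, χ m n b * phi0 a m n)
        - (1 / 7 : ℝ) * kd a b * ∑ m, ∑ n, ∑ c, χ m n c * phi0 c m n)) :
    ((1 / 6 : ℝ) * ∑ a, ∑ b, ∑ c, (A * phi0 a b c) ^ 2) = 7 * A ^ 2 ∧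
    ((1 / 6 : ℝ) * ∑ a, ∑ b, ∑ c, (∑ d, ω d * psi0 d a b c) ^ 2) = 4 * ∑ a, (ω a) ^ 2 ∧
    ((1 / 6 : ℝ) * ∑ a, ∑ b, ∑ c, (iphi h a b c) ^ 2) = (2 / 9 : ℝ) * ∑ a, ∑ b, (h a b) ^ 2 := by
  have hG := isCrossProductForm_phi0_psi0
  obtain rfl : h = pi27Matrix χ := funext₂ hh
  refine ⟨?_, ?_, ?_⟩
  · simp only [mul_pow, ← mul_sum, hG.sum_sq_phi, Fintype.card_fin]
    ring
  · rw [hG.sum_sq_sum_mul_psi, Fintype.card_fin]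
    ring
  · simp only [iphi, mul_pow, ← mul_sum,
      hG.sum_sq_action (pi27Matrix_isSymm χ) (pi27Matrix_trace χ), Fintype.card_fin]
    ring

/-- With the projection data `a`, `ω`, `h` of a totally antisymmetric
3-tensor `χ` on `ℝ⁷` and the norm `|ξ|² = (1/6) Σ_{a,b,c} (ξ_{abc})²` on 3-tensors, the
projections satisfy `|π₁(χ)|² = |a φ₀|² = 7 a²`, `|π₇(χ)|² = |ω ⌟ ψ₀|² = 4 |ω|²` and
`|π₂₇(χ)|² = |i_φ(h)|² = (2/9) |h|²`. -/
theorem lambda3_projection_norms (χ : Fin 7 → Fin 7 → Fin 7 → ℝ)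
    (hχ₁ : ∀ a b c, χ a b c = -χ b a c) (hχ₂ : ∀ a b c, χ a b c = -χ a c b)
    (A : ℝ) (hA : A = (1 / 42 : ℝ) * ∑ a, ∑ b, ∑ c, χ a b c * phi0 a b c)
    (ω : Fin 7 → ℝ)
    (hω : ∀ a, ω a = -(1 / 24 : ℝ) * ∑ m, ∑ n, ∑ p, χ m n p * psi0 m n p a)
    (h : Matrix (Fin 7) (Fin 7) ℝ)
    (hh : ∀ a b, h a b = (3 / 4 : ℝ) *
      ((1 / 2 : ℝ) * ((∑ m, ∑ n, χ m n a * phi0 b m n) + ∑ m, ∑ n, χ m n b * phi0 a m n)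
        - (1 / 7 : ℝ) * kd a b * ∑ m, ∑ n, ∑ c, χ m n c * phi0 c m n)) :
    ((1 / 6 : ℝ) * ∑ a, ∑ b, ∑ c, (A * phi0 a b c) ^ 2) = 7 * A ^ 2 ∧
    ((1 / 6 : ℝ) * ∑ a, ∑ b, ∑ c, (∑ d, ω d * psi0 d a b c) ^ 2) = 4 * ∑ a, (ω a) ^ 2 ∧
    ((1 / 6 : ℝ) * ∑ a, ∑ b, ∑ c, (iphi h a b c) ^ 2) = (2 / 9 : ℝ) * ∑ a, ∑ b, (h a b) ^ 2 :=
  lambda3_projection_norms_general χ A ω h hh
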